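/- Let u, v ∈ S² with angular distance to a fixed point c ∈ S² both less than π/4, and suppose the angle ∠(u, c, v) (the spherical angle at c between the arcs cu and cv) is at most π/2. Then the angular distance between u and v is less than π/3. -/
import Mathlib


open Real RealInnerProductSpace

/-- The spherical angle at `c` between the arcs `cu` and `cv`: the angle between the
projections of `u` and `v` onto the tangent plane at `c`. -/
noncomputable def sphAngle (u c v : EuclideanSpace ℝ (Fin 3)) : ℝ :=
  InnerProductGeometry.angle (u - ⟪u, c⟫ • c) (v - ⟪v, c⟫ • c)

lemma aux_gt_sqrt2 {x : ℝ} (h : Real.arccos x < π/4) : Real.sqrt 2 / 2 < x := by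
  rcases lt_or_ge x (Real.sqrt 2 / 2) with h' | h'
  · exfalso
    have : ¬ Real.arccos x ≤ π / 4 := by
      rw [Real.arccos_le_pi_div_four]; linarith
    exact this h.le
  · rcases eq_or_lt_of_le h' with rfl | h''
    · exfalso
      have hp : Real.arccos (Real.sqrt 2 / 2) = π / 4 := by
        rw [← Real.cos_pi_div_four]
        exact Real.arccos_cos (by positivity) (by linarith [Real.pi_pos])
      rw [hp] at h; linarith
    · exact h''

theorem spherical_law_cosines_bound
    (u v c : EuclideanSpace ℝ (Fin 3)) (hu : ‖u‖ = 1) (hv : ‖v‖ = 1) (hc : ‖c‖ = 1)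
    (hdu : Real.arccos ⟪u, c⟫ < π/4) (hdv : Real.arccos ⟪v, c⟫ < π/4)
    (hang : sphAngle u c v ≤ π/2) :
    Real.arccos ⟪u, v⟫ < π/3 := by
  have ha2 : Real.sqrt 2 / 2 < ⟪u, c⟫ := aux_gt_sqrt2 hdu
  have hb2 : Real.sqrt 2 / 2 < ⟪v, c⟫ := aux_gt_sqrt2 hdv
  have hs2 : (0:ℝ) < Real.sqrt 2 / 2 := by positivity
  have hs2sq : (Real.sqrt 2 / 2) ^ 2 = 1/2 := by
    rw [div_pow, Real.sq_sqrt (by norm_num : (0:ℝ) ≤ 2)]; norm_num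
  have hab : 1/2 < ⟪u, c⟫ * ⟪v, c⟫ := by nlinarith
  set u' := u - ⟪u, c⟫ • c with hu'
  set v' := v - ⟪v, c⟫ • c with hv'
  have hproj : (0:ℝ) ≤ ⟪u', v'⟫ := by
    have h1 : (0:ℝ) ≤ ⟪u', v'⟫ / (‖u'‖ * ‖v'‖) := by
      rw [sphAngle, InnerProductGeometry.angle] at hang
      exact Real.arccos_le_pi_div_two.mp hang
    rcases eq_or_lt_of_le (mul_nonneg (norm_nonneg u') (norm_nonneg v')) with h0 | h0
    · rcases mul_eq_zero.mp h0.symm with h | h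
      · rw [norm_eq_zero.mp h, inner_zero_left]
      · rw [norm_eq_zero.mp h, inner_zero_right]
    · have := mul_nonneg h1 h0.le
      rwa [div_mul_cancel₀ _ (ne_of_gt h0)] at this
  have hcc : (⟪c, c⟫ : ℝ) = 1 := by
    rw [real_inner_self_eq_norm_sq, hc]; norm_num
  have hexpand : (⟪u', v'⟫ : ℝ) = ⟪u, v⟫ - ⟪u, c⟫ * ⟪v, c⟫ := by
    rw [hu', hv']
    simp only [inner_sub_left, inner_sub_right, inner_smul_left, inner_smul_right,
      conj_trivial]
    rw [real_inner_comm c u, real_inner_comm c v, hcc]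
    ring
  have huv : 1/2 < (⟪u, v⟫ : ℝ) := by
    have := hexpand ▸ hproj
    linarith
  calc Real.arccos ⟪u, v⟫ < Real.arccos (1/2) := by
        apply Real.strictAntiOn_arccos ⟨by norm_num, by norm_num⟩
          ⟨by linarith, ?_⟩ huv
        calc (⟪u, v⟫ : ℝ) ≤ ‖u‖ * ‖v‖ := real_inner_le_norm u v
          _ = 1 := by rw [hu, hv]; norm_num
    _ = π/3 := by
        rw [← Real.cos_pi_div_three]
        exact Real.arccos_cos (by positivity) (by linarith [Real.pi_pos])
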